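/- Let M1 = ⟨I,T1⟩ and M2 = ⟨I,T2⟩ be three-valued strong models of a disjunctive definite program P with the same set I of inadmissible atoms. Then ⟨I, T1 ∩ T2⟩ is also a strong model of P. -/
import Mathlib


open Classical

/-- The three truth values: true, false, inadmissible. -/
inductive TV : Type where
  | t : TV
  | f : TV
  | i : TV
deriving DecidableEq

/-- Kleene strong three-valued conjunction. -/
def TV.and : TV → TV → TV
  | .t, .t => .t
  | .f, _ => .f
  | _, .f => .f
  | _, _ => .i

/-- Kleene strong three-valued disjunction. -/
def TV.or : TV → TV → TV
  | .f, .f => .f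
  | .t, _ => .t
  | _, .t => .t
  | _, _ => .i

/-- Ground body formulas over a set `α` of ground atoms:
built from atoms using binary conjunction and disjunction. -/
inductive Body (α : Type*) : Type _ where
  | atom : α → Body α
  | conj : Body α → Body α → Body α
  | disj : Body α → Body α → Body α

variable {α : Type*}

/-- Value of an atom in the interpretation `⟨I,T⟩` (inadmissible atoms `I`,
true atoms `T`, all other atoms false). -/
noncomputable def atomVal (I T : Set α) (a : α) : TV :=
  if a ∈ T then TV.t else if a ∈ I then TV.i else TV.f

/-- Kleene strong three-valued evaluation of a body formula in `⟨I,T⟩`. -/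
noncomputable def beval (I T : Set α) : Body α → TV
  | .atom a => atomVal I T a
  | .conj b c => TV.and (beval I T b) (beval I T c)
  | .disj b c => TV.or (beval I T b) (beval I T c)

/-- A (ground) disjunctive definite program: a set of ground clause instances
`H ← B`, represented as pairs `(H, B)`. -/
abbrev Program (α : Type*) := Set (α × Body α)

/-- `⟨I,T⟩` is a model of `P`: no clause instance `H ← B` in `P` has `H`
evaluating to F while `B` evaluates to T or I (i.e. head F implies body F). -/
def IsModel (P : Program α) (I T : Set α) : Prop :=
  ∀ c ∈ P, atomVal I T c.1 = TV.f → beval I T c.2 = TV.f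

/-- `⟨I,T⟩` is a strong model of `P`: a model such that no clause instance
`H ← B` in `P` has `H` evaluating to I while `B` evaluates to T. -/
def IsStrongModel (P : Program α) (I T : Set α) : Prop :=
  IsModel P I T ∧ ∀ c ∈ P, atomVal I T c.1 = TV.i → beval I T c.2 ≠ TV.t

def TV.rank : TV → ℕ
  | .f => 0
  | .i => 1
  | .t => 2

lemma TV.rank_and (x y : TV) : (TV.and x y).rank = min x.rank y.rank := by
  cases x <;> cases y <;> rfl

lemma TV.rank_or (x y : TV) : (TV.or x y).rank = max x.rank y.rank := by
  cases x <;> cases y <;> rfl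

lemma TV.rank_eq_two {x : TV} (h : x.rank = 2) : x = TV.t := by
  cases x <;> simp_all [TV.rank]

lemma TV.rank_eq_zero {x : TV} (h : x.rank = 0) : x = TV.f := by
  cases x <;> simp_all [TV.rank]

lemma beval_rank_mono {α : Type*} {I S T : Set α}
    (h : ∀ a, (atomVal I S a).rank ≤ (atomVal I T a).rank) (b : Body α) :
    (beval I S b).rank ≤ (beval I T b).rank := by
  induction b with
  | atom a => exact h a
  | conj b c hb hc =>
      simp only [beval, TV.rank_and]
      exact min_le_min hb hc
  | disj b c hb hc =>
      simp only [beval, TV.rank_or]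
      exact max_le_max hb hc

lemma atom_rank_inter_le {α : Type*} {I T₁ T₂ : Set α}
    (hdisj : Disjoint I T₁) (a : α) :
    (atomVal I (T₁ ∩ T₂) a).rank ≤ (atomVal I T₁ a).rank := by
  unfold atomVal
  by_cases h1 : a ∈ T₁
  · simp only [h1, if_true]
    split_ifs <;> simp [TV.rank]
  · have : a ∉ T₁ ∩ T₂ := fun h => h1 h.1
    simp only [this, if_false, h1]
    split_ifs <;> simp [TV.rank]

/-- If `⟨I,T₁⟩` and `⟨I,T₂⟩` are strong models of `P` with the
same set `I` of inadmissible atoms, then `⟨I, T₁ ∩ T₂⟩` is also a strong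
model of `P`. -/
theorem strong_model_inter_true {α : Type*} (P : Program α) (I T₁ T₂ : Set α)
    (h₁disj : Disjoint I T₁) (h₂disj : Disjoint I T₂)
    (h₁ : IsStrongModel P I T₁) (h₂ : IsStrongModel P I T₂) :
    IsStrongModel P I (T₁ ∩ T₂) := by
  have mono₁ : ∀ b, (beval I (T₁ ∩ T₂) b).rank ≤ (beval I T₁ b).rank :=
    beval_rank_mono (fun a => atom_rank_inter_le h₁disj a)
  have mono₂ : ∀ b, (beval I (T₁ ∩ T₂) b).rank ≤ (beval I T₂ b).rank := by
    have : T₁ ∩ T₂ = T₂ ∩ T₁ := Set.inter_comm _ _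
    rw [this]
    exact beval_rank_mono (fun a => atom_rank_inter_le h₂disj a)
  constructor
  · intro c hc hhead
    -- head is false in ⟨I, T₁ ∩ T₂⟩: c.1 ∉ T₁ ∩ T₂ and c.1 ∉ I
    unfold atomVal at hhead
    split_ifs at hhead with hT hI
    have hnT : c.1 ∉ T₁ ∨ c.1 ∉ T₂ := by
      by_contra h
      push_neg at h
      exact hT ⟨h.1, h.2⟩
    rcases hnT with hn | hn
    · have : atomVal I T₁ c.1 = TV.f := by unfold atomVal; simp [hn, hI]
      have hb := h₁.1 c hc this
      have := mono₁ c.2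
      rw [hb] at this
      exact TV.rank_eq_zero (Nat.le_zero.mp this)
    · have : atomVal I T₂ c.1 = TV.f := by unfold atomVal; simp [hn, hI]
      have hb := h₂.1 c hc this
      have := mono₂ c.2
      rw [hb] at this
      exact TV.rank_eq_zero (Nat.le_zero.mp this)
  · intro c hc hhead hbody
    -- head is inadmissible: c.1 ∈ I, c.1 ∉ T₁ ∩ T₂
    unfold atomVal at hhead
    split_ifs at hhead with hT hI
    have hn1 : c.1 ∉ T₁ := fun h => h₁disj.ne_of_mem hI h rfl
    have : atomVal I T₁ c.1 = TV.i := by unfold atomVal; simp [hn1, hI]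
    have hne := h₁.2 c hc this
    have hle := mono₁ c.2
    rw [hbody] at hle
    exact hne (TV.rank_eq_two (Nat.le_antisymm (by cases beval I T₁ c.2 <;> simp [TV.rank]) hle))
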